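/- If H is a graph on n vertices with at least one edge, and D = {x_{i_1},...,x_{i_k}} is a maximal independent set of H with k < n, then for any choice of n−1−k whisker vertices y_j with j ∉ {i_1,...,i_k} omitting one index m ∉ {i_1,...,i_k}, the independent set F = D ∪ {y_j : j ∉ {i_1,...,i_k}, j ≠ m} of w(H) is contained in exactly one maximal independent set of w(H), namely F ∪ {y_m}. -/

import Mathlib

def whisker {n : ℕ} (H : SimpleGraph (Fin n)) : SimpleGraph (Fin n ⊕ Fin n) :=
  SimpleGraph.fromRel (fun u v =>
    (∃ i j, H.Adj i j ∧ u = Sum.inl i ∧ v = Sum.inl j) ∨ ∃ i, u = Sum.inl i ∧ v = Sum.inr i)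

def IsIndep {V : Type*} (G : SimpleGraph V) (S : Set V) : Prop :=
  ∀ u ∈ S, ∀ v ∈ S, ¬ G.Adj u v

/-- A maximal independent set: an independent set not properly contained in
another independent set. -/
def MaxIndep {V : Type*} [DecidableEq V] (G : SimpleGraph V) (F : Finset V) : Prop :=
  IsIndep G ↑F ∧ ∀ F' : Finset V, IsIndep G ↑F' → F ⊆ F' → F = F'

/-!
`D` dominates `H` by maximality, so an independent set of `w(H)` containing the
`x_d` (`d ∈ D`) can contain no other `x_i`, and no `y_d` with `d ∈ D`. Hence every
independent set containing `F` lies inside the independent set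
`F ∪ {y_m} = {x_d : d ∈ D} ∪ {y_j : j ∉ D}`, which is therefore the only maximal one.
-/

section MaxIndep

variable {V : Type*} [DecidableEq V] {G : SimpleGraph V}

theorem MaxIndep.exists_adj_of_notMem {D : Finset V} (hD : MaxIndep G D) {v : V} (hv : v ∉ D) :
    ∃ d ∈ D, G.Adj v d := by
  by_contra! hnadj
  have hind : IsIndep G ↑(insert v D) := by
    intro u hu w hw
    simp only [Finset.coe_insert, Set.mem_insert_iff, Finset.mem_coe] at hu hw
    rcases hu with rfl | hu <;> rcases hw with rfl | hw
    · exact G.loopless.irrefl _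
    · exact hnadj w hw
    · exact fun h => hnadj u hu h.symm
    · exact hD.1 u hu w hw
  exact hv (hD.2 _ hind (Finset.subset_insert v D) ▸ Finset.mem_insert_self v D)

theorem maxIndep_and_superset_iff {F S : Finset V} (hS : IsIndep G ↑S) (hFS : F ⊆ S)
    (hle : ∀ T : Finset V, IsIndep G ↑T → F ⊆ T → T ⊆ S) (M : Finset V) :
    (MaxIndep G M ∧ F ⊆ M) ↔ M = S := by
  constructor
  · rintro ⟨⟨hM, hMmax⟩, hFM⟩
    exact hMmax S hS (hle M hM hFM)
  · rintro rfl
    exact ⟨⟨hS, fun T hT hMT => (hle T hT (hFS.trans hMT)).antisymm' hMT⟩, hFS⟩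

end MaxIndep

section Whisker

variable {n : ℕ} (H : SimpleGraph (Fin n))

theorem whisker_adj_inl_inl (i j : Fin n) :
    (whisker H).Adj (Sum.inl i) (Sum.inl j) ↔ H.Adj i j := by
  constructor
  · rintro ⟨-, (⟨a, b, hab, ha, hb⟩ | ⟨a, ha, hb⟩) | (⟨a, b, hab, ha, hb⟩ | ⟨a, ha, hb⟩)⟩ <;>
      simp_all [H.adj_comm]
  · exact fun h => ⟨by simpa using h.ne, Or.inl (Or.inl ⟨i, j, h, rfl, rfl⟩)⟩

theorem whisker_adj_inl_inr (i j : Fin n) :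
    (whisker H).Adj (Sum.inl i) (Sum.inr j) ↔ i = j := by
  constructor
  · rintro ⟨-, (⟨a, b, hab, ha, hb⟩ | ⟨a, ha, hb⟩) | (⟨a, b, hab, ha, hb⟩ | ⟨a, ha, hb⟩)⟩ <;>
      simp_all
  · rintro rfl
    exact ⟨by simp, Or.inl (Or.inr ⟨i, rfl, rfl⟩)⟩

theorem not_whisker_adj_inr_inr (i j : Fin n) : ¬ (whisker H).Adj (Sum.inr i) (Sum.inr j) := by
  rintro ⟨-, (⟨a, b, hab, ha, hb⟩ | ⟨a, ha, hb⟩) | (⟨a, b, hab, ha, hb⟩ | ⟨a, ha, hb⟩)⟩ <;>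
    simp_all

def whiskerExtension (D : Finset (Fin n)) : Finset (Fin n ⊕ Fin n) :=
  D.image Sum.inl ∪ Dᶜ.image Sum.inr

variable {H}

theorem isIndep_whiskerExtension {D : Finset (Fin n)} (hD : IsIndep H ↑D) :
    IsIndep (whisker H) ↑(whiskerExtension D) := by
  intro u hu v hv
  simp only [whiskerExtension, Finset.coe_union, Finset.coe_image, Set.mem_union,
    Set.mem_image, Finset.mem_coe, Finset.mem_compl] at hu hv
  rcases hu with ⟨i, hi, rfl⟩ | ⟨i, hi, rfl⟩ <;> rcases hv with ⟨j, hj, rfl⟩ | ⟨j, hj, rfl⟩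
  · rw [whisker_adj_inl_inl]; exact hD i hi j hj
  · rw [whisker_adj_inl_inr]; rintro rfl; exact hj hi
  · rw [SimpleGraph.adj_comm, whisker_adj_inl_inr]; rintro rfl; exact hi hj
  · exact not_whisker_adj_inr_inr H i j

theorem subset_whiskerExtension {D : Finset (Fin n)} (hD : MaxIndep H D)
    {T : Finset (Fin n ⊕ Fin n)} (hT : IsIndep (whisker H) ↑T) (hDT : D.image Sum.inl ⊆ T) :
    T ⊆ whiskerExtension D := by
  have hinl : ∀ {d}, d ∈ D → (Sum.inl d : Fin n ⊕ Fin n) ∈ T :=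
    fun hd => hDT (Finset.mem_image_of_mem _ hd)
  rintro (i | i) hi <;>
    simp only [whiskerExtension, Finset.mem_union, Finset.mem_image, Finset.mem_compl,
      Sum.inl.injEq, Sum.inr.injEq, reduceCtorEq, and_false, exists_false, exists_eq_right,
      false_or, or_false]
  · by_contra hiD
    obtain ⟨d, hd, hid⟩ := hD.exists_adj_of_notMem hiD
    exact hT _ hi _ (hinl hd) ((whisker_adj_inl_inl H i d).2 hid)
  · exact fun hiD => hT _ (hinl hiD) _ hi ((whisker_adj_inl_inr H i i).2 rfl)

end Whisker

theorem boundary_face_from_maxIndep_general {n : ℕ} (H : SimpleGraph (Fin n))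
    (D : Finset (Fin n)) (hD : MaxIndep H D)
    (m : Fin n) (hm : m ∉ D)
    (F : Finset (Fin n ⊕ Fin n))
    (hFdef : F = D.image Sum.inl ∪ ((Finset.univ \ D).erase m).image Sum.inr) :
    ∀ M : Finset (Fin n ⊕ Fin n),
      (MaxIndep (whisker H) M ∧ F ⊆ M) ↔ M = F ∪ {Sum.inr m} := by
  have hext : F ∪ {Sum.inr m} = whiskerExtension D := by
    have hmc : m ∈ Dᶜ := Finset.mem_compl.2 hm
    rw [hFdef, whiskerExtension, Finset.union_assoc, ← Finset.image_singleton Sum.inr,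
      ← Finset.image_union, ← Finset.compl_eq_univ_sdiff, Finset.union_comm (Dᶜ.erase m),
      ← Finset.insert_eq, Finset.insert_erase hmc]
  rw [hext]
  have hFext : F ⊆ whiskerExtension D := hext ▸ Finset.subset_union_left
  have hDF : D.image Sum.inl ⊆ F := hFdef ▸ Finset.subset_union_left
  exact maxIndep_and_superset_iff (isIndep_whiskerExtension hD.1) hFext
    fun T hT hFT => subset_whiskerExtension hD hT (hDF.trans hFT)

/-- If `H` has an edge and `D` is a maximal independent set of `H` with
`|D| < n`, then for any `m ∉ D` the independent set
`F = {x_i : i ∈ D} ∪ {y_j : j ∉ D, j ≠ m}` of `w(H)` is contained in exactly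
one maximal independent set of `w(H)`, namely `F ∪ {y_m}`. -/
theorem boundary_face_from_maxIndep {n : ℕ} (H : SimpleGraph (Fin n))
    (hedge : ∃ a b : Fin n, H.Adj a b)
    (D : Finset (Fin n)) (hD : MaxIndep H D) (hDcard : D.card < n)
    (m : Fin n) (hm : m ∉ D)
    (F : Finset (Fin n ⊕ Fin n))
    (hFdef : F = D.image Sum.inl ∪ ((Finset.univ \ D).erase m).image Sum.inr) :
    ∀ M : Finset (Fin n ⊕ Fin n),
      (MaxIndep (whisker H) M ∧ F ⊆ M) ↔ M = F ∪ {Sum.inr m} :=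
  boundary_face_from_maxIndep_general H D hD m hm F hFdef
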